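/- arXiv:2509.01646 — 5 statements merged into one kernel-verified Lean document; each statement's English description precedes it below -/
import Mathlib

section
/- Let R be a commutative ring, S a multiplicative subset of R, and M, P be R-modules. Then the following are equivalent: (1) P is u-S-projective relative to M; (2) for every R-module epimorphism g : M → N, the induced map g_* : Hom_R(P,M) → Hom_R(P,N) is a u-S-epimorphism; (3) for every submodule K of M, the map (η_K)_* : Hom_R(P,M) → Hom_R(P,M/K) induced by the natural quotient map η_K : M → M/K is a u-S-epimorphism. -/
universe u v w

variable (R : Type u) [CommRing R]

/-- An `R`-module `T` is uniformly `S`-torsion if there is `s ∈ S` with `s • T = 0`. -/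
def IsUSTorsion (S : Submonoid R) (T : Type*) [AddCommGroup T] [Module R T] : Prop :=
  ∃ s ∈ S, ∀ t : T, s • t = 0

/-- `f` is a `u`-`S`-epimorphism if its cokernel is uniformly `S`-torsion. -/
def IsUSEpi (S : Submonoid R) {M N : Type*} [AddCommGroup M] [Module R M]
    [AddCommGroup N] [Module R N] (f : M →ₗ[R] N) : Prop :=
  IsUSTorsion R S (N ⧸ LinearMap.range f)

/-- `f` is a `u`-`S`-monomorphism if its kernel is uniformly `S`-torsion. -/
def IsUSMono (S : Submonoid R) {M N : Type*} [AddCommGroup M] [Module R M]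
    [AddCommGroup N] [Module R N] (f : M →ₗ[R] N) : Prop :=
  IsUSTorsion R S (LinearMap.ker f)

/-- `P` is `u`-`S`-projective relative to `M` if for every `u`-`S`-epimorphism
`f : M → N`, the induced map `Hom(P,M) → Hom(P,N)` is a `u`-`S`-epimorphism. -/
def IsUSProjRel (S : Submonoid R) (P : Type w) [AddCommGroup P] [Module R P]
    (M : Type v) [AddCommGroup M] [Module R M] : Prop :=
  ∀ (N : Type v) [AddCommGroup N] [Module R N] (f : M →ₗ[R] N),
    IsUSEpi R S f → IsUSEpi R S (LinearMap.llcomp (σ₁₂ := RingHom.id R) (σ₁₃ := RingHom.id R) R P M N f)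

/-- `E` is `u`-`S`-injective relative to `M` if for every `u`-`S`-monomorphism
`f : K → M`, the induced map `Hom(M,E) → Hom(K,E)` is a `u`-`S`-epimorphism. -/
def IsUSInjRel (S : Submonoid R) (E : Type w) [AddCommGroup E] [Module R E]
    (M : Type v) [AddCommGroup M] [Module R M] : Prop :=
  ∀ (K : Type v) [AddCommGroup K] [Module R K] (f : K →ₗ[R] M),
    IsUSMono R S f → IsUSEpi R S (LinearMap.lcomp R E f)


lemma isUSEpi_iff (S : Submonoid R) {M : Type v} {N : Type w} [AddCommGroup M] [Module R M]
    [AddCommGroup N] [Module R N] (f : M →ₗ[R] N) :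
    IsUSEpi R S f ↔ ∃ s ∈ S, ∀ n : N, s • n ∈ LinearMap.range f := by
  constructor
  · rintro ⟨s, hs, h⟩
    refine ⟨s, hs, fun n => ?_⟩
    have := h (Submodule.Quotient.mk n)
    rwa [← Submodule.Quotient.mk_smul, Submodule.Quotient.mk_eq_zero] at this
  · rintro ⟨s, hs, h⟩
    refine ⟨s, hs, fun t => ?_⟩
    obtain ⟨n, rfl⟩ := Submodule.Quotient.mk_surjective _ t
    rw [← Submodule.Quotient.mk_smul, Submodule.Quotient.mk_eq_zero]
    exact h n

theorem stmt0 (S : Submonoid R) (hS : (0 : R) ∉ S)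
    (M : Type v) [AddCommGroup M] [Module R M]
    (P : Type w) [AddCommGroup P] [Module R P] :
    List.TFAE
      [ IsUSProjRel R S P M,
        ∀ (N : Type v) [AddCommGroup N] [Module R N] (g : M →ₗ[R] N),
          Function.Surjective g → IsUSEpi R S (LinearMap.llcomp (σ₁₂ := RingHom.id R) (σ₁₃ := RingHom.id R) R P M N g),
        ∀ K : Submodule R M,
          IsUSEpi R S (LinearMap.llcomp (σ₁₂ := RingHom.id R) (σ₁₃ := RingHom.id R) R P M (M ⧸ K) K.mkQ) ] := by
  tfae_have 1 → 2 := by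
    intro h1 N _ _ g hg
    apply h1
    rw [isUSEpi_iff]
    exact ⟨1, one_mem S, fun n => by
      obtain ⟨m, rfl⟩ := hg n; exact ⟨m, by simp⟩⟩
  tfae_have 2 → 3 := by
    intro h2 K
    exact h2 (M ⧸ K) K.mkQ (Submodule.mkQ_surjective K)
  tfae_have 3 → 1 := by
    intro h3 N _ _ f hf
    rw [isUSEpi_iff] at hf ⊢
    obtain ⟨s, hsS, hs⟩ := hf
    obtain ⟨t, htS, ht⟩ := (isUSEpi_iff R S _).mp (h3 (LinearMap.ker f))
    refine ⟨t * s, mul_mem htS hsS, fun g => ?_⟩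
    set e := f.quotKerEquivRange
    -- corestrict s • g to range f
    have hmem : ∀ p : P, (s • g) p ∈ LinearMap.range f := fun p => by
      simpa using hs (g p)
    set h : P →ₗ[R] LinearMap.range f := (s • g).codRestrict _ hmem
    obtain ⟨φ, hφ⟩ := ht ((e.symm : LinearMap.range f →ₗ[R] M ⧸ LinearMap.ker f).comp h)
    refine ⟨φ, ?_⟩
    ext p
    have hφp : (LinearMap.ker f).mkQ (φ p) = t • e.symm (h p) := by
      have := congrArg (fun ψ => ψ p) hφ
      simpa using this
    have : f (φ p) = ((e ((LinearMap.ker f).mkQ (φ p)) : LinearMap.range f) : N) := by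
      simp [e, LinearMap.quotKerEquivRange]
    show f (φ p) = ((t * s) • g) p
    rw [this, hφp]
    simp [h, mul_smul]
  tfae_finish
end

section
/- Let R be a commutative ring, S a multiplicative subset of R, and M, U be R-modules. If U is projective relative to M (i.e., for every epimorphism f : M → N the induced map Hom_R(U,f) : Hom_R(U,M) → Hom_R(U,N) is an epimorphism), then U is u-S-projective relative to M. Dually, if U is injective relative to M (i.e., for every monomorphism g : K → M the induced map Hom_R(g,U) : Hom_R(M,U) → Hom_R(K,U) is an epimorphism), then U is u-S-injective relative to M. -/
universe u v w

variable (R : Type u) [CommRing R]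

theorem stmt2 (S : Submonoid R) (hS : (0 : R) ∉ S)
    (M : Type v) [AddCommGroup M] [Module R M]
    (U : Type w) [AddCommGroup U] [Module R U] :
    ((∀ (N : Type v) [AddCommGroup N] [Module R N] (f : M →ₗ[R] N),
        Function.Surjective f → Function.Surjective (LinearMap.llcomp (σ₁₂ := RingHom.id R) (σ₁₃ := RingHom.id R) R U M N f)) →
      IsUSProjRel R S U M) ∧
    ((∀ (K : Type v) [AddCommGroup K] [Module R K] (g : K →ₗ[R] M),
        Function.Injective g → Function.Surjective (LinearMap.lcomp R U g)) →
      IsUSInjRel R S U M) := by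

  constructor
  · intro H N _ _ f hf
    obtain ⟨s, hs, hst⟩ := hf
    refine ⟨s, hs, fun t => ?_⟩
    obtain ⟨g, rfl⟩ := Submodule.Quotient.mk_surjective _ t
    rw [← Submodule.Quotient.mk_smul, Submodule.Quotient.mk_eq_zero]
    have hrange : ∀ u : U, (s • g) u ∈ LinearMap.range f := by
      intro u
      have := hst (Submodule.Quotient.mk (g u))
      rw [← Submodule.Quotient.mk_smul, Submodule.Quotient.mk_eq_zero] at this
      simpa using this
    set g' : U →ₗ[R] (LinearMap.range f) := (s • g).codRestrict _ hrange with hg'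
    obtain ⟨h, hh⟩ := H (LinearMap.range f) f.rangeRestrict f.surjective_rangeRestrict g'
    refine ⟨h, ?_⟩
    ext u
    have : f.rangeRestrict.comp h = g' := hh
    have h2 := congrArg (fun (ψ : U →ₗ[R] LinearMap.range f) => (ψ u : N)) this
    simpa [LinearMap.llcomp_apply, g'] using h2
  · intro H K _ _ g hg
    obtain ⟨s, hs, hst⟩ := hg
    refine ⟨s, hs, fun t => ?_⟩
    obtain ⟨φ, rfl⟩ := Submodule.Quotient.mk_surjective _ t
    rw [← Submodule.Quotient.mk_smul, Submodule.Quotient.mk_eq_zero]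
    have hker : LinearMap.ker g ≤ LinearMap.ker (s • φ) := by
      intro k hk
      have h1 := hst ⟨k, hk⟩
      have h2 : s • k = 0 := congrArg Subtype.val h1
      simp only [LinearMap.mem_ker, LinearMap.smul_apply, ← map_smul, h2, map_zero]
    set φ' : (K ⧸ LinearMap.ker g) →ₗ[R] U := (LinearMap.ker g).liftQ (s • φ) hker with hφ'
    set gbar : (K ⧸ LinearMap.ker g) →ₗ[R] M := (LinearMap.ker g).liftQ g le_rfl with hgbar
    have hinj : Function.Injective gbar := by
      rw [← LinearMap.ker_eq_bot, hgbar, Submodule.ker_liftQ_eq_bot _ _ _ le_rfl]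
    obtain ⟨ψ, hψ⟩ := H (K ⧸ LinearMap.ker g) gbar hinj φ'
    refine ⟨ψ, ?_⟩
    ext k
    have h2 := congrArg (fun (χ : (K ⧸ LinearMap.ker g) →ₗ[R] U) => χ (Submodule.Quotient.mk k)) hψ
    simpa [LinearMap.lcomp_apply, gbar, φ'] using h2
end

section
/- Let R be a commutative ring, S a multiplicative subset of R, M an R-module, and f : A → B a u-S-isomorphism of R-modules. Then A is u-S-projective relative to M if and only if B is u-S-projective relative to M; and A is u-S-injective relative to M if and only if B is u-S-injective relative to M. -/
universe u v w

variable (R : Type u) [CommRing R]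

lemma exists_quasi_inverse (S : Submonoid R) {A B : Type*} [AddCommGroup A] [Module R A]
    [AddCommGroup B] [Module R B] (f : A →ₗ[R] B) (hm : IsUSMono R S f)
    (he : IsUSEpi R S f) :
    ∃ u ∈ S, ∃ g : B →ₗ[R] A,
      (∀ a, g (f a) = u • a) ∧ (∀ b, f (g b) = u • b) := by
  obtain ⟨s, hs, hker⟩ := hm
  obtain ⟨t, ht, hcok⟩ := he
  have hrange : ∀ b : B, ∃ a, f a = t • b := by
    intro b
    have h0 := hcok (Submodule.Quotient.mk b)
    rw [← Submodule.Quotient.mk_smul, Submodule.Quotient.mk_eq_zero] at h0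
    exact h0
  choose a0 ha0 using hrange
  have hker' : ∀ x : A, f x = 0 → s • x = 0 := by
    intro x hx
    have h1 := hker ⟨x, hx⟩
    exact congrArg Subtype.val h1
  refine ⟨s * t, S.mul_mem hs ht, ?_⟩
  have hsub : ∀ b₁ b₂ : B, s • a0 (b₁ + b₂) = s • a0 b₁ + s • a0 b₂ := by
    intro b₁ b₂
    have hz : f (a0 (b₁ + b₂) - a0 b₁ - a0 b₂) = 0 := by
      simp only [map_sub, ha0, smul_add]
      abel
    have := hker' _ hz
    rw [sub_sub, smul_sub, sub_eq_zero, smul_add] at this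
    exact this
  have hsmul : ∀ (r : R) (b : B), s • a0 (r • b) = r • (s • a0 b) := by
    intro r b
    have hz : f (a0 (r • b) - r • a0 b) = 0 := by
      simp [map_sub, ha0, smul_comm r t]
    have := hker' _ hz
    rw [smul_sub, sub_eq_zero] at this
    rw [this, smul_comm]
  refine ⟨{ toFun := fun b => s • a0 b,
            map_add' := hsub,
            map_smul' := fun r b => by simpa using hsmul r b }, ?_, ?_⟩
  · intro a
    have hz : f (a0 (f a) - t • a) = 0 := by
      simp [map_sub, ha0]
    have := hker' _ hz
    rw [smul_sub, sub_eq_zero] at this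
    show s • a0 (f a) = (s * t) • a
    rw [this, smul_smul]
  · intro b
    show f (s • a0 b) = (s * t) • b
    rw [map_smul, ha0, smul_smul]

lemma projRel_trans (S : Submonoid R)
    (M : Type v) [AddCommGroup M] [Module R M]
    {A B : Type w} [AddCommGroup A] [Module R A] [AddCommGroup B] [Module R B]
    (u : R) (hu : u ∈ S) (p : A →ₗ[R] B) (q : B →ₗ[R] A)
    (hpq : ∀ b, p (q b) = u • b)
    (hA : IsUSProjRel R S A M) : IsUSProjRel R S B M := by
  intro N _ _ h hh
  obtain ⟨c, hc, hcz⟩ := hA N h hh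
  refine ⟨u * c, S.mul_mem hu hc, ?_⟩
  intro x
  obtain ⟨φ, rfl⟩ := Submodule.Quotient.mk_surjective _ x
  rw [← Submodule.Quotient.mk_smul, Submodule.Quotient.mk_eq_zero]
  have h1 := hcz (Submodule.Quotient.mk (φ ∘ₗ p))
  rw [← Submodule.Quotient.mk_smul, Submodule.Quotient.mk_eq_zero] at h1
  obtain ⟨ψ, hψ⟩ := h1
  refine ⟨ψ ∘ₗ q, ?_⟩
  ext b
  have h3 : h (ψ (q b)) = (c • (φ ∘ₗ p)) (q b) := congrArg (fun g => g (q b)) hψ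
  simp only [LinearMap.smul_apply, LinearMap.comp_apply] at h3
  simp only [LinearMap.llcomp_apply, LinearMap.comp_apply, LinearMap.smul_apply]
  rw [h3, hpq, map_smul, smul_comm c u, ← mul_smul]

lemma injRel_trans (S : Submonoid R)
    (M : Type v) [AddCommGroup M] [Module R M]
    {A B : Type w} [AddCommGroup A] [Module R A] [AddCommGroup B] [Module R B]
    (u : R) (hu : u ∈ S) (p : A →ₗ[R] B) (q : B →ₗ[R] A)
    (hpq : ∀ b, p (q b) = u • b)
    (hA : IsUSInjRel R S A M) : IsUSInjRel R S B M := by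
  intro K _ _ k hk
  obtain ⟨c, hc, hcz⟩ := hA K k hk
  refine ⟨u * c, S.mul_mem hu hc, ?_⟩
  intro x
  obtain ⟨φ, rfl⟩ := Submodule.Quotient.mk_surjective _ x
  rw [← Submodule.Quotient.mk_smul, Submodule.Quotient.mk_eq_zero]
  have h1 := hcz (Submodule.Quotient.mk (q ∘ₗ φ))
  rw [← Submodule.Quotient.mk_smul, Submodule.Quotient.mk_eq_zero] at h1
  obtain ⟨ψ, hψ⟩ := h1
  refine ⟨p ∘ₗ ψ, ?_⟩
  ext x
  have h3 : ψ (k x) = (c • (q ∘ₗ φ)) x := congrArg (fun g => g x) hψ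
  simp only [LinearMap.smul_apply, LinearMap.comp_apply] at h3
  simp only [LinearMap.lcomp_apply, LinearMap.comp_apply, LinearMap.smul_apply]
  rw [h3, map_smul, hpq, smul_comm c u, ← mul_smul]

theorem stmt5 (S : Submonoid R) (hS : (0 : R) ∉ S)
    (M : Type v) [AddCommGroup M] [Module R M]
    (A : Type w) [AddCommGroup A] [Module R A]
    (B : Type w) [AddCommGroup B] [Module R B]
    (f : A →ₗ[R] B) (hfm : IsUSMono R S f) (hfe : IsUSEpi R S f) :
    (IsUSProjRel R S A M ↔ IsUSProjRel R S B M) ∧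
    (IsUSInjRel R S A M ↔ IsUSInjRel R S B M) := by
  obtain ⟨u, hu, g, hgf, hfg⟩ := exists_quasi_inverse R S f hfm hfe
  exact ⟨⟨fun h => projRel_trans R S M u hu f g hfg h,
          fun h => projRel_trans R S M u hu g f hgf h⟩,
         ⟨fun h => injRel_trans R S M u hu f g hfg h,
          fun h => injRel_trans R S M u hu g f hgf h⟩⟩
end

section
/- Let R be a commutative ring and S a multiplicative subset of R. Consider a commutative diagram of R-modules with exact rows: the top row A → B → C with maps f : A → B and g : B → C, the bottom row D → E → F with maps h : D → E and k : E → F, and vertical maps α : A → D, β : B → E, γ : C → F satisfying h∘α = β∘f and k∘β = γ∘g. If β is a u-S-epimorphism and h and γ are monomorphisms, then α is a u-S-epimorphism. -/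
universe u v w

variable (R : Type u) [CommRing R]

theorem stmt7 (S : Submonoid R) (hS : (0 : R) ∉ S)
    (A B C D E F : Type v)
    [AddCommGroup A] [Module R A] [AddCommGroup B] [Module R B]
    [AddCommGroup C] [Module R C] [AddCommGroup D] [Module R D]
    [AddCommGroup E] [Module R E] [AddCommGroup F] [Module R F]
    (f : A →ₗ[R] B) (g : B →ₗ[R] C) (h : D →ₗ[R] E) (k : E →ₗ[R] F)
    (α : A →ₗ[R] D) (β : B →ₗ[R] E) (γ : C →ₗ[R] F)
    (hsq1 : h ∘ₗ α = β ∘ₗ f) (hsq2 : k ∘ₗ β = γ ∘ₗ g)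
    (htop : LinearMap.range f = LinearMap.ker g)
    (hbot : LinearMap.range h = LinearMap.ker k)
    (hβ : IsUSEpi R S β)
    (hh : Function.Injective h) (hγ : Function.Injective γ) :
    IsUSEpi R S α := by
  obtain ⟨s, hsS, hs⟩ := hβ
  refine ⟨s, hsS, ?_⟩
  intro t
  obtain ⟨d, rfl⟩ := Submodule.Quotient.mk_surjective _ t
  rw [← Submodule.Quotient.mk_smul, Submodule.Quotient.mk_eq_zero]
  have h1 := hs (Submodule.Quotient.mk (h d))
  rw [← Submodule.Quotient.mk_smul, Submodule.Quotient.mk_eq_zero] at h1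
  obtain ⟨b, hb⟩ := h1
  have hkd : k (h d) = 0 := by
    have : h d ∈ LinearMap.ker k := hbot ▸ LinearMap.mem_range_self h d
    exact this
  have hgb : g b = 0 := by
    apply hγ
    have : k (β b) = γ (g b) := LinearMap.congr_fun hsq2 b
    rw [← this, hb, map_smul, hkd, smul_zero, map_zero]
  obtain ⟨a, ha⟩ : b ∈ LinearMap.range f := htop ▸ hgb
  refine ⟨a, hh ?_⟩
  have : h (α a) = β (f a) := LinearMap.congr_fun hsq1 a
  rw [this, ha, hb, map_smul]
end

section
/- Let R be a commutative ring, S a multiplicative subset of R, and 0 → A → B → C → 0 a u-S-split short exact sequence of R-modules with maps f : A → B and g : B → C. Then for every R-module M, the induced map Hom_R(M,g) : Hom_R(M,B) → Hom_R(M,C) is a u-S-epimorphism. -/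
universe u v w

variable (R : Type u) [CommRing R]

theorem stmt8 (S : Submonoid R) (hS : (0 : R) ∉ S)
    (A B C : Type v)
    [AddCommGroup A] [Module R A] [AddCommGroup B] [Module R B]
    [AddCommGroup C] [Module R C]
    (f : A →ₗ[R] B) (g : B →ₗ[R] C)
    (hf : Function.Injective f) (hg : Function.Surjective g)
    (hex : LinearMap.range f = LinearMap.ker g)
    (hsplit : ∃ s ∈ S, ∃ f' : B →ₗ[R] A, f' ∘ₗ f = s • LinearMap.id)
    (M : Type w) [AddCommGroup M] [Module R M] :
    IsUSEpi R S (LinearMap.llcomp (σ₁₂ := RingHom.id R) (σ₁₃ := RingHom.id R) R M B C g) := by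
  obtain ⟨s, hs, f', hf'⟩ := hsplit
  -- h kills ker g
  set h : B →ₗ[R] B := s • LinearMap.id - f ∘ₗ f' with hh
  have hker : LinearMap.ker g ≤ LinearMap.ker h := by
    intro b hb
    rw [← hex] at hb
    obtain ⟨a, rfl⟩ := hb
    have := congrArg (fun φ => φ a) hf'
    simp only [LinearMap.comp_apply, LinearMap.smul_apply, LinearMap.id_apply] at this
    simp [hh, LinearMap.sub_apply, this, map_smul]
  let e := g.quotKerEquivOfSurjective hg
  let g' : C →ₗ[R] B := (LinearMap.ker g).liftQ h hker ∘ₗ (e.symm : C →ₗ[R] B ⧸ LinearMap.ker g)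
  have hg'g : ∀ b : B, g' (g b) = h b := by
    intro b
    have : e.symm (g b) = Submodule.Quotient.mk b := by
      apply e.injective
      simp [e, LinearMap.quotKerEquivOfSurjective]
    simp [g', this]
  have hgg' : ∀ c : C, g (g' c) = s • c := by
    intro c
    obtain ⟨b, rfl⟩ := hg c
    rw [hg'g]
    have hgf : g (f (f' b)) = 0 := by
      have : f (f' b) ∈ LinearMap.ker g := hex ▸ LinearMap.mem_range_self f (f' b)
      exact this
    simp [hh, map_smul, hgf]
  refine ⟨s, hs, fun t => ?_⟩
  obtain ⟨φ, rfl⟩ := Submodule.Quotient.mk_surjective _ t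
  rw [← Submodule.Quotient.mk_smul, Submodule.Quotient.mk_eq_zero]
  refine ⟨g' ∘ₗ φ, ?_⟩
  ext m
  simp [hgg' (φ m)]
end
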